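/- arXiv:2010.16112 — 8 statements merged into one kernel-verified Lean document; each statement's English description precedes it below -/
import Mathlib

section
/- Let A ∈ GL(V) satisfy <Au, Av> = <u,v> for a nondegenerate sesquilinear form. Let f_i, f_j be irreducible factors of the characteristic polynomial of A with generalized eigenspaces V_i, V_j. If f_i† does not divide f_j (where f†(x) = Σ ā_{n-i} x^i for f of degree n), then V_i ⊥ V_j. -/
open Polynomial

private lemma my_reverse_reverse {K : Type*} [Field K] {p : K[X]}
    (h : p.coeff 0 ≠ 0) : p.reverse.reverse = p := by
  have ht : p.natTrailingDegree = 0 := natTrailingDegree_eq_zero.mpr (Or.inr h)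
  have hd : p.reverse.natDegree = p.natDegree := by
    rw [reverse_natDegree, ht, Nat.sub_zero]
  ext n
  rw [coeff_reverse, hd, coeff_reverse, revAt_invol]

private lemma my_irreducible_reverse {K : Type*} [Field K] {p : K[X]}
    (hp : Irreducible p) (h0 : p.coeff 0 ≠ 0) : Irreducible p.reverse := by
  have hd : p.reverse.natDegree = p.natDegree := by
    rw [reverse_natDegree, natTrailingDegree_eq_zero.mpr (Or.inr h0), Nat.sub_zero]
  constructor
  · intro hun
    have := natDegree_eq_zero_of_isUnit hun
    rw [hd] at this
    exact (hp.natDegree_pos.ne' this)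
  · intro a b hab
    have hpne : p ≠ 0 := hp.ne_zero
    have hcoeff : a.coeff 0 * b.coeff 0 = p.leadingCoeff := by
      rw [← mul_coeff_zero, ← hab, coeff_zero_reverse]
    have hlc : p.leadingCoeff ≠ 0 := leadingCoeff_ne_zero.mpr hpne
    have ha0 : a.coeff 0 ≠ 0 := fun h => hlc (by rw [← hcoeff, h, zero_mul])
    have hb0 : b.coeff 0 ≠ 0 := fun h => hlc (by rw [← hcoeff, h, mul_zero])
    have hfact : p = a.reverse * b.reverse := by
      rw [← reverse_mul_of_domain, ← hab, my_reverse_reverse h0]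
    have hda : a.reverse.natDegree = a.natDegree := by
      rw [reverse_natDegree, natTrailingDegree_eq_zero.mpr (Or.inr ha0), Nat.sub_zero]
    have hdb : b.reverse.natDegree = b.natDegree := by
      rw [reverse_natDegree, natTrailingDegree_eq_zero.mpr (Or.inr hb0), Nat.sub_zero]
    rcases hp.isUnit_or_isUnit hfact with h | h
    · left
      have := natDegree_eq_zero_of_isUnit h
      rw [hda] at this
      rw [eq_C_of_natDegree_eq_zero this]
      exact (isUnit_C).mpr (Ne.isUnit ha0)
    · right
      have := natDegree_eq_zero_of_isUnit h
      rw [hdb] at this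
      rw [eq_C_of_natDegree_eq_zero this]
      exact (isUnit_C).mpr (Ne.isUnit hb0)

theorem stmt2 {K V : Type*} [Field K] [AddCommGroup V] [Module K V] [FiniteDimensional K V]
    (σ : K →+* K) (hσ : ∀ a, σ (σ a) = a)
    (B : V →ₗ[K] V →ₛₗ[σ] K)
    (hB : ∀ u : V, (∀ w : V, B u w = 0) → u = 0)
    (A : Module.End K V)
    (hA : ∀ u v : V, B (A u) (A v) = B u v)
    (fi fj : K[X]) (hfi : Irreducible fi) (hfj : Irreducible fj)
    (hdi : fi ∣ A.charpoly) (hdj : fj ∣ A.charpoly)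
    (hnd : ¬ (fi.reverse.map σ ∣ fj)) :
    ∀ u v : V,
      ((aeval A fi) ^ Module.finrank K V) u = 0 →
      ((aeval A fj) ^ Module.finrank K V) v = 0 →
      B u v = 0 := by
  intro u v hu hv
  set N := Module.finrank K V with hN
  -- A is injective
  have hinj : Function.Injective A := by
    intro x y hxy
    have hz : A (x - y) = 0 := by rw [map_sub, hxy, sub_self]
    have : x - y = 0 := by
      apply hB
      intro w
      calc B (x - y) w = B (A (x - y)) (A w) := (hA _ _).symm
        _ = 0 := by rw [hz]; simp
    exact sub_eq_zero.mp this
  have hAunit : IsUnit A := (Module.End.isUnit_iff A).mpr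
    ⟨hinj, (LinearMap.injective_iff_surjective).mp hinj⟩
  obtain ⟨w, hw⟩ := hAunit
  set A' : Module.End K V := ↑w⁻¹ with hA'
  have hAA' : A * A' = 1 := by rw [← hw, hA', ← Units.val_mul, mul_inv_cancel, Units.val_one]
  have hA'A : A' * A = 1 := by rw [← hw, hA', ← Units.val_mul, inv_mul_cancel, Units.val_one]
  have happ : ∀ x, A (A' x) = x := by
    intro x
    have := congrFun (congrArg DFunLike.coe hAA') x
    simpa using this
  have happ' : ∀ x, A' (A x) = x := by
    intro x
    have := congrFun (congrArg DFunLike.coe hA'A) x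
    simpa using this
  -- adjoint relations
  have hadj2 : ∀ x y : V, B x (A y) = B (A' x) y := by
    intro x y
    calc B x (A y) = B (A (A' x)) (A y) := by rw [happ]
      _ = B (A' x) y := hA _ _
  have hpow2 : ∀ (n : ℕ) (x y : V), B x ((A ^ n) y) = B ((A' ^ n) x) y := by
    intro n
    induction n with
    | zero => intro x y; simp
    | succ n ih =>
      intro x y
      have h1 : (A ^ (n + 1)) y = A ((A ^ n) y) := by rw [pow_succ']; rfl
      have h2 : (A' ^ (n + 1)) x = (A' ^ n) (A' x) := by rw [pow_succ]; rfl
      rw [h1, h2, hadj2, ih]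
  have hpoly2 : ∀ (p : K[X]) (x y : V),
      B x ((aeval A p) y) = B ((aeval A' (p.map σ)) x) y := by
    intro p
    induction p using Polynomial.induction_on' with
    | add p q hp hq =>
      intro x y
      simp only [Polynomial.map_add, map_add, LinearMap.add_apply]
      rw [hp, hq]
    | monomial n a =>
      intro x y
      rw [map_monomial, aeval_monomial, aeval_monomial]
      have h1 : (algebraMap K (Module.End K V) a * A ^ n) y = a • ((A ^ n) y) := by
        rw [Module.End.mul_apply, Module.algebraMap_end_apply]
      have h2 : (algebraMap K (Module.End K V) (σ a) * A' ^ n) x = σ a • ((A' ^ n) x) := by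
        rw [Module.End.mul_apply, Module.algebraMap_end_apply]
      rw [h1, h2, (B x).map_smulₛₗ, map_smul, LinearMap.smul_apply, hpow2]
  -- powers cancel
  have hpowmul : ∀ k : ℕ, A' ^ k * A ^ k = 1 := by
    intro k
    induction k with
    | zero => simp
    | succ k ih =>
      rw [pow_succ A' k, pow_succ' A k, mul_assoc, ← mul_assoc A' A, hA'A, one_mul, ih]
  have hpowmul' : ∀ k : ℕ, A ^ k * A' ^ k = 1 := by
    intro k
    induction k with
    | zero => simp
    | succ k ih =>
      rw [pow_succ A k, pow_succ' A' k, mul_assoc, ← mul_assoc A A', hAA', one_mul, ih]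
  -- evaluation of reflect at the inverse
  have key : ∀ (M : ℕ) (f : K[X]), f.natDegree ≤ M →
      aeval A' (reflect M f) * A ^ M = aeval A f := by
    intro M
    refine Polynomial.induction_with_natDegree_le
      (fun f => aeval A' (reflect M f) * A ^ M = aeval A f) M ?_ ?_ ?_
    · simp
    · intro n r _ hnM
      rw [reflect_C_mul_X_pow, revAt_le hnM, map_mul, map_mul, aeval_C, aeval_C,
        map_pow, map_pow, aeval_X, aeval_X]
      have hAA : A' ^ (M - n) * A ^ M = A ^ n := by
        have hM : A ^ M = A ^ (M - n) * A ^ n := by rw [← pow_add, Nat.sub_add_cancel hnM]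
        rw [hM, ← mul_assoc, hpowmul, one_mul]
      rw [mul_assoc, hAA]
    · intro f g _ _ hf hg
      rw [reflect_add, map_add, add_mul, hf, hg, map_add]
  -- commutation of A' with polynomials in A
  have hcomm : Commute A' A := by
    unfold Commute SemiconjBy
    rw [hA'A, hAA']
  have hcommP : ∀ p : K[X], Commute A' (aeval A p) := by
    intro p
    induction p using Polynomial.induction_on' with
    | add p q hp hq => rw [map_add]; exact hp.add_right hq
    | monomial n a =>
      rw [aeval_monomial]
      have c1 : Commute A' (algebraMap K (Module.End K V) a) := (Algebra.commutes a A').symm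
      exact c1.mul_right (hcomm.pow_right n)
  by_cases h0 : fi.coeff 0 = 0
  · -- fi is (up to unit) X, hence u = 0
    obtain ⟨g, hg⟩ := X_dvd_iff.mpr h0
    have hgu : IsUnit g := (hfi.isUnit_or_isUnit hg).resolve_left not_isUnit_X
    have heq : aeval A fi = A * aeval A g := by rw [hg, map_mul, aeval_X]
    have hun : IsUnit ((aeval A fi) ^ N) := by
      rw [heq]
      have hAu : IsUnit A := ⟨w, hw⟩
      exact (hAu.mul (hgu.map (aeval A))).pow N
    have hu0 : u = 0 := by
      have hbij := (Module.End.isUnit_iff _).mp hun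
      have : ((aeval A fi) ^ N) u = ((aeval A fi) ^ N) 0 := by rw [hu, map_zero]
      exact hbij.injective this
    rw [hu0, map_zero, LinearMap.zero_apply]
  · -- main case
    set f' : K[X] := fi.reverse.map σ with hf'
    have hσe : Irreducible f' := by
      have h1 : Irreducible fi.reverse := my_irreducible_reverse hfi h0
      let σe : K ≃+* K := RingEquiv.ofRingHom σ σ (RingHom.ext hσ) (RingHom.ext hσ)
      have hco : (σe : K →+* K) = σ := RingHom.ext fun x => rfl
      have h2 : f' = Polynomial.mapEquiv σe fi.reverse := by
        rw [mapEquiv_apply, hco]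
      rw [h2]
      exact (MulEquiv.irreducible_iff (Polynomial.mapEquiv σe)).mpr h1
    have hcop : IsCoprime (f' ^ N) (fj ^ N) :=
      (hσe.coprime_iff_not_dvd.mpr hnd).pow
    obtain ⟨a, b, hab⟩ := hcop
    have e1 : (aeval A (b * fj ^ N)) v = 0 := by
      rw [map_mul, Module.End.mul_apply, map_pow, hv, map_zero]
    have e2 : v = (aeval A (f' ^ N)) ((aeval A a) v) := by
      have h1 : (aeval A (a * f' ^ N + b * fj ^ N)) v = v := by
        rw [hab, map_one, Module.End.one_apply]
      rw [map_add, LinearMap.add_apply, e1, add_zero, mul_comm, map_mul,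
        Module.End.mul_apply] at h1
      exact h1.symm
    set z := (aeval A a) v with hz
    have e3 : B u v = B ((aeval A' ((f' ^ N).map σ)) u) z := by
      rw [e2, hpoly2]
    have hmap : (f' ^ N).map σ = fi.reverse ^ N := by
      rw [Polynomial.map_pow, hf', map_map]
      have : σ.comp σ = RingHom.id K := RingHom.ext hσ
      rw [this, map_id]
    rw [e3, hmap]
    -- show (aeval A' fi.reverse ^ N) u = 0
    have hrevrefl : fi.reverse = reflect fi.natDegree fi := rfl
    have hkey := key fi.natDegree fi le_rfl
    rw [← hrevrefl] at hkey
    set d := fi.natDegree with hd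
    have hrev : aeval A' fi.reverse = aeval A fi * A' ^ d := by
      have h2 : aeval A' fi.reverse * (A ^ d * A' ^ d) = aeval A fi * A' ^ d := by
        rw [← mul_assoc, hkey]
      rwa [hpowmul' d, mul_one] at h2
    have cP : Commute (A' ^ d) (aeval A fi) := ((hcommP fi).pow_left d)
    have hzero : ((aeval A' fi.reverse) ^ N) u = 0 := by
      rw [hrev, ← cP.eq, cP.mul_pow, Module.End.mul_apply, hu, map_zero]
    rw [map_pow, hzero, map_zero, LinearMap.zero_apply]
end

section
/- Let V be a finite-dimensional vector space over a field K, A ∈ End(V), v ∈ V, φ ∈ V*. The following are equivalent: (1) φ(A^k v) = 0 for all k ≥ 0; (2) for all λ ∈ K, the characteristic polynomial of A + λ v⊗φ equals that of A; (3) there exists λ ∈ K, λ ≠ 0, such that the characteristic polynomial of A + λ v⊗φ equals that of A. -/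
open Polynomial

set_option synthInstance.maxHeartbeats 1000000
set_option maxHeartbeats 1000000

section Stmt3AuxSection

open Matrix Finset

namespace Stmt3Aux

variable {K : Type*} [Field K] {ι : Type*} [Fintype ι] [DecidableEq ι]

noncomputable def sA (M : Matrix ι ι K) (c r : ι → K) (k : ℕ) : K :=
  r ⬝ᵥ (M ^ k *ᵥ c)

noncomputable def pA (M : Matrix ι ι K) (c r : ι → K) : K[X] :=
  ∑ i ∈ range (M.charpoly.natDegree + 1), M.charpoly.coeff i •
    ∑ j ∈ range i, sA M c r (i - 1 - j) • (X : K[X]) ^ j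

noncomputable def psi (M : Matrix ι ι K) : Matrix ι ι (RatFunc K) :=
  ∑ i ∈ range (M.charpoly.natDegree + 1), M.charpoly.coeff i •
    ∑ j ∈ range i, (RatFunc.X : RatFunc K) ^ j • (M.map (algebraMap K (RatFunc K))) ^ (i - 1 - j)

lemma aeval_ratfunc_X (χ : K[X]) :
    Polynomial.aeval (RatFunc.X : RatFunc K) χ = algebraMap K[X] (RatFunc K) χ := by
  have h : (Polynomial.aeval (RatFunc.X : RatFunc K) : K[X] →ₐ[K] RatFunc K)
      = (IsScalarTower.toAlgHom K K[X] (RatFunc K)) := by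
    apply Polynomial.algHom_ext
    simp [RatFunc.algebraMap_X]
  exact congrFun (congrArg _ h) χ

lemma S_mul_psi (M : Matrix ι ι K) :
    ((RatFunc.X : RatFunc K) • (1 : Matrix ι ι (RatFunc K)) - M.map (algebraMap K (RatFunc K)))
        * psi M = algebraMap K[X] (RatFunc K) M.charpoly • (1 : Matrix ι ι (RatFunc K)) := by
  set F := RatFunc K
  set b : Matrix ι ι F := M.map (algebraMap K F) with hb
  set x : Matrix ι ι F := (RatFunc.X : F) • (1 : Matrix ι ι F) with hx
  have hxpow : ∀ j : ℕ, (RatFunc.X : F) ^ j • (1 : Matrix ι ι F) = x ^ j := by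
    intro j
    rw [hx, _root_.smul_pow, one_pow]
  have hpsi : psi M = ∑ i ∈ range (M.charpoly.natDegree + 1), M.charpoly.coeff i •
      ∑ j ∈ range i, x ^ j * b ^ (i - 1 - j) := by
    unfold psi
    refine Finset.sum_congr rfl fun i _ => ?_
    congr 1
    refine Finset.sum_congr rfl fun j _ => ?_
    rw [← hxpow, smul_mul_assoc, one_mul]
  have hcomm : Commute x b := by
    rw [hx]
    exact (Commute.one_left b).smul_left _
  rw [hpsi, mul_sum]
  have hterm : ∀ i ∈ range (M.charpoly.natDegree + 1),
      (x - b) * (M.charpoly.coeff i • ∑ j ∈ range i, x ^ j * b ^ (i - 1 - j))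
        = M.charpoly.coeff i • (x ^ i - b ^ i) := by
    intro i _
    rw [mul_smul_comm, hcomm.mul_geom_sum₂ i]
  rw [Finset.sum_congr rfl hterm]
  have hsplit : ∑ i ∈ range (M.charpoly.natDegree + 1),
      M.charpoly.coeff i • (x ^ i - b ^ i)
      = (∑ i ∈ range (M.charpoly.natDegree + 1), M.charpoly.coeff i • x ^ i)
        - ∑ i ∈ range (M.charpoly.natDegree + 1), M.charpoly.coeff i • b ^ i := by
    rw [← Finset.sum_sub_distrib]
    exact Finset.sum_congr rfl fun i _ => smul_sub _ _ _
  have haevalb : ∑ i ∈ range (M.charpoly.natDegree + 1), M.charpoly.coeff i • b ^ i = 0 := by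
    rw [← Polynomial.aeval_eq_sum_range]
    rw [hb, ← Polynomial.aeval_map_algebraMap F, ← Matrix.charpoly_map]
    exact Matrix.aeval_self_charpoly _
  have haevalx : ∑ i ∈ range (M.charpoly.natDegree + 1), M.charpoly.coeff i • x ^ i
      = algebraMap K[X] F M.charpoly • (1 : Matrix ι ι F) := by
    rw [← Polynomial.aeval_eq_sum_range]
    have h1 : x = ((Algebra.ofId F (Matrix ι ι F)).restrictScalars K) RatFunc.X := by
      rw [AlgHom.restrictScalars_apply, Algebra.ofId_apply, Algebra.algebraMap_eq_smul_one]
    rw [h1, Polynomial.aeval_algHom_apply, aeval_ratfunc_X, AlgHom.restrictScalars_apply,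
      Algebra.ofId_apply, Algebra.algebraMap_eq_smul_one]
  rw [hsplit, haevalb, haevalx, sub_zero]


lemma map_charmatrix (M : Matrix ι ι K) :
    (charmatrix M).map (algebraMap K[X] (RatFunc K)) =
      (RatFunc.X : RatFunc K) • (1 : Matrix ι ι (RatFunc K)) - M.map (algebraMap K (RatFunc K)) := by
  ext i j
  by_cases h : i = j <;>
    simp [h, charmatrix_apply_eq, charmatrix_apply_ne, Matrix.one_apply, RatFunc.algebraMap_X,
      RatFunc.algebraMap_C, Matrix.smul_apply, smul_eq_mul, mul_ite, mul_one, mul_zero]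

lemma det_S (M : Matrix ι ι K) :
    ((RatFunc.X : RatFunc K) • (1 : Matrix ι ι (RatFunc K))
      - M.map (algebraMap K (RatFunc K))).det = algebraMap K[X] (RatFunc K) M.charpoly := by
  rw [← map_charmatrix, ← RingHom.mapMatrix_apply, ← RingHom.map_det]
  rfl

lemma det_S_ne (M : Matrix ι ι K) :
    ((RatFunc.X : RatFunc K) • (1 : Matrix ι ι (RatFunc K))
      - M.map (algebraMap K (RatFunc K))).det ≠ 0 := by
  rw [det_S]
  intro h
  exact (M.charpoly_monic).ne_zero
    (RatFunc.algebraMap_injective K (h.trans (map_zero _).symm))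

lemma psi_eq (M : Matrix ι ι K) :
    psi M = algebraMap K[X] (RatFunc K) M.charpoly •
      ((RatFunc.X : RatFunc K) • (1 : Matrix ι ι (RatFunc K))
        - M.map (algebraMap K (RatFunc K)))⁻¹ := by
  set S := (RatFunc.X : RatFunc K) • (1 : Matrix ι ι (RatFunc K))
      - M.map (algebraMap K (RatFunc K)) with hS
  have hU : IsUnit S.det := isUnit_iff_ne_zero.mpr (det_S_ne M)
  calc psi M = S⁻¹ * (S * psi M) := (Matrix.nonsing_inv_mul_cancel_left S _ hU).symm
    _ = S⁻¹ * (algebraMap K[X] (RatFunc K) M.charpoly • 1) := by rw [S_mul_psi]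
    _ = algebraMap K[X] (RatFunc K) M.charpoly • S⁻¹ := by
        rw [Matrix.mul_smul, Matrix.mul_one]

lemma dot_psi (M : Matrix ι ι K) (c r : ι → K) :
    (fun j => algebraMap K (RatFunc K) (r j)) ⬝ᵥ
        (psi M *ᵥ fun i => algebraMap K (RatFunc K) (c i)) =
      algebraMap K[X] (RatFunc K) (pA M c r) := by
  set F := RatFunc K
  set f := algebraMap K F
  set c' : ι → F := fun i => f (c i)
  set r' : ι → F := fun j => f (r j)
  set b : Matrix ι ι F := M.map f with hb
  have hLpow : ∀ m : ℕ, r' ⬝ᵥ ((b ^ m) *ᵥ c') = f (sA M c r m) := by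
    intro m
    rw [hb, ← RingHom.mapMatrix_apply, ← map_pow, RingHom.mapMatrix_apply]
    simp [sA, Matrix.mulVec, dotProduct, map_sum, _root_.map_mul, Finset.mul_sum, c', r']
  set L : Matrix ι ι F →ₗ[F] F :=
    { toFun := fun B => r' ⬝ᵥ (B *ᵥ c')
      map_add' := by
        intro B B'
        simp [Matrix.add_mulVec, dotProduct_add]
      map_smul' := by
        intro a B
        simp [Matrix.smul_mulVec, dotProduct_smul] } with hL
  show L (psi M) = _
  rw [psi, map_sum, pA, map_sum]
  refine Finset.sum_congr rfl fun i _ => ?_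
  rw [← algebraMap_smul F (M.charpoly.coeff i), L.map_smul, map_sum,
    smul_eq_C_mul, _root_.map_mul, RatFunc.algebraMap_C, ← RatFunc.algebraMap_eq_C, map_sum]
  rw [Algebra.smul_def]
  congr 1
  refine Finset.sum_congr rfl fun j _ => ?_
  rw [L.map_smul, smul_eq_mul, smul_eq_C_mul, _root_.map_mul, RatFunc.algebraMap_C,
    ← RatFunc.algebraMap_eq_C]
  have hXj : algebraMap K[X] F ((X : K[X]) ^ j) = (RatFunc.X : F) ^ j := by
    rw [_root_.map_pow, RatFunc.algebraMap_X]
  rw [hXj]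
  show RatFunc.X ^ j * (r' ⬝ᵥ ((b ^ (i-1-j)) *ᵥ c')) = _
  rw [hLpow]
  ring


theorem charpoly_add (M : Matrix ι ι K) (c r : ι → K) (l : K) :
    (M + l • Matrix.of (fun i j => c i * r j)).charpoly = M.charpoly - l • pA M c r := by
  apply RatFunc.algebraMap_injective K
  set F := RatFunc K
  set f := algebraMap K F
  set c' : ι → F := fun i => f (c i)
  set r' : ι → F := fun j => f (r j)
  set b : Matrix ι ι F := M.map f with hb
  set S : Matrix ι ι F := (RatFunc.X : F) • (1 : Matrix ι ι F) - b with hSdef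
  have hU : IsUnit S.det := isUnit_iff_ne_zero.mpr (det_S_ne M)
  have hmap : (M + l • Matrix.of (fun i j => c i * r j)).map f
      = b + Matrix.replicateCol (Fin 1) (f l • c') * Matrix.replicateRow (Fin 1) r' := by
    ext i j
    simp [Matrix.mul_apply, Matrix.replicateCol, Matrix.replicateRow, _root_.map_mul, _root_.map_add, c', r',
      Matrix.map_apply, hb, mul_comm, mul_left_comm]
  have step1 : algebraMap K[X] F (M + l • Matrix.of (fun i j => c i * r j)).charpoly
      = (S + Matrix.replicateCol (Fin 1) ((-(f l)) • c') * Matrix.replicateRow (Fin 1) r').det := by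
    rw [← det_S (M + l • Matrix.of (fun i j => c i * r j))]
    congr 1
    rw [hmap]
    ext i j
    simp [Matrix.mul_apply, Matrix.replicateCol, Matrix.replicateRow, hSdef]
    ring
  have hdet1 : ∀ (d : DecidableEq (Fin 1)) (inst : Fintype (Fin 1)) (A : Matrix (Fin 1) (Fin 1) F),
      @Matrix.det _ d inst F _ A = A 0 0 := by
    intro d inst A
    rw [Subsingleton.elim d (instDecidableEqFin 1), Subsingleton.elim inst (Fin.fintype 1)]
    exact Matrix.det_fin_one A
  rw [step1]
  erw [Matrix.det_add_replicateCol_mul_replicateRow (ι := Fin 1) hU]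
  rw [hdet1]
  simp only [Matrix.add_apply, Matrix.one_apply_eq]
  rw [← Matrix.replicateRow_vecMul, Matrix.replicateRow_mul_replicateCol_apply, dotProduct_smul, smul_eq_mul,
    ← dotProduct_mulVec]
  have key : algebraMap K[X] F M.charpoly * (r' ⬝ᵥ (S⁻¹ *ᵥ c'))
      = algebraMap K[X] F (pA M c r) := by
    rw [← dot_psi M c r, psi_eq M]
    show _ = r' ⬝ᵥ ((algebraMap K[X] F M.charpoly • S⁻¹) *ᵥ c')
    rw [Matrix.smul_mulVec, dotProduct_smul, smul_eq_mul]
  rw [mul_add, mul_one, det_S M,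
    show algebraMap K[X] F M.charpoly * (-(f l) * (r' ⬝ᵥ S⁻¹ *ᵥ c'))
      = -(f l) * (algebraMap K[X] F M.charpoly * (r' ⬝ᵥ S⁻¹ *ᵥ c')) by ring, key]
  rw [_root_.map_sub]
  have hsm : algebraMap K[X] F (l • pA M c r) = f l * algebraMap K[X] F (pA M c r) := by
    rw [smul_eq_C_mul, _root_.map_mul, RatFunc.algebraMap_C, ← RatFunc.algebraMap_eq_C]
  rw [hsm]
  ring


noncomputable def dotL (c r : ι → K) : Matrix ι ι K →ₗ[K] K where
  toFun := fun B => r ⬝ᵥ (B *ᵥ c)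
  map_add' := by
    intro B B'
    simp [Matrix.add_mulVec, dotProduct_add]
  map_smul' := by
    intro a B
    simp [Matrix.smul_mulVec, dotProduct_smul]

lemma sA_eq_dotL (M : Matrix ι ι K) (c r : ι → K) (m : ℕ) :
    sA M c r m = dotL c r (M ^ m) := rfl

lemma pA_coeff (M : Matrix ι ι K) (c r : ι → K) (t : ℕ) :
    (pA M c r).coeff t = ∑ i ∈ range (M.charpoly.natDegree + 1),
      M.charpoly.coeff i * (if t < i then sA M c r (i - 1 - t) else 0) := by
  rw [pA, finset_sum_coeff]
  refine Finset.sum_congr rfl fun i _ => ?_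
  rw [coeff_smul, smul_eq_mul, finset_sum_coeff]
  congr 1
  have : ∀ j ∈ range i, (sA M c r (i - 1 - j) • (X : K[X]) ^ j).coeff t
      = if j = t then sA M c r (i - 1 - j) else 0 := by
    intro j _
    rw [coeff_smul, coeff_X_pow, smul_eq_mul]
    by_cases h : t = j <;> simp [h, eq_comm]
  rw [Finset.sum_congr rfl this, Finset.sum_ite_eq' (range i) t]
  simp [Finset.mem_range]

lemma sA_zero_of_pA_zero (M : Matrix ι ι K) (c r : ι → K) (h : pA M c r = 0) :
    ∀ k, sA M c r k = 0 := by
  cases isEmpty_or_nonempty ι with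
  | inl hemp =>
      intro k
      simp [sA, dotProduct]
  | inr hne =>
      have hn : M.charpoly.natDegree = Fintype.card ι := M.charpoly_natDegree_eq_dim
      set n := Fintype.card ι with hcard
      have hn1 : 1 ≤ n := Fintype.card_pos
      have hmonic : M.charpoly.coeff M.charpoly.natDegree = 1 :=
        (M.charpoly_monic).coeff_natDegree
      intro k
      induction k using Nat.strong_induction_on with
      | _ k ih =>
        by_cases hk : k < n
        · have h0 : (pA M c r).coeff (n - 1 - k) = 0 := by rw [h]; simp
          rw [pA_coeff, Finset.sum_range_succ] at h0
          have hz : ∀ i ∈ range M.charpoly.natDegree,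
              M.charpoly.coeff i * (if n - 1 - k < i then sA M c r (i - 1 - (n - 1 - k)) else 0)
                = 0 := by
            intro i hi
            rw [Finset.mem_range] at hi
            by_cases hti : n - 1 - k < i
            · rw [if_pos hti, ih _ (by omega), mul_zero]
            · rw [if_neg hti, mul_zero]
          rw [Finset.sum_eq_zero hz, zero_add, hmonic, one_mul, hn,
            if_pos (by omega)] at h0
          have : n - 1 - (n - 1 - k) = k := by omega
          rwa [this] at h0
        · have hsum : ∑ i ∈ range (M.charpoly.natDegree + 1),
              M.charpoly.coeff i • M ^ (k - n + i) = 0 := by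
            have : ∑ i ∈ range (M.charpoly.natDegree + 1), M.charpoly.coeff i • M ^ (k - n + i)
                = M ^ (k - n) * ∑ i ∈ range (M.charpoly.natDegree + 1),
                    M.charpoly.coeff i • M ^ i := by
              rw [Finset.mul_sum]
              exact Finset.sum_congr rfl fun i _ => by
                rw [mul_smul_comm, ← pow_add]
            rw [this, ← Polynomial.aeval_eq_sum_range, Matrix.aeval_self_charpoly, mul_zero]
          have h0 := congrArg (dotL c r) hsum
          rw [map_sum, map_zero] at h0
          have hsplit : ∀ i ∈ range M.charpoly.natDegree,
              dotL c r (M.charpoly.coeff i • M ^ (k - n + i)) = 0 := by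
            intro i hi
            rw [Finset.mem_range] at hi
            rw [LinearMap.map_smul, ← sA_eq_dotL, ih (k - n + i) (by omega), smul_zero]
          rw [Finset.sum_range_succ, Finset.sum_eq_zero hsplit, zero_add,
            LinearMap.map_smul, hmonic, one_smul, ← sA_eq_dotL, hn] at h0
          have : k - n + n = k := by omega
          rwa [this] at h0

lemma pA_zero_iff (M : Matrix ι ι K) (c r : ι → K) :
    pA M c r = 0 ↔ ∀ k, sA M c r k = 0 := by
  constructor
  · exact sA_zero_of_pA_zero M c r
  · intro h
    simp [pA, h]

end Stmt3Aux

end Stmt3AuxSection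

open Stmt3Aux Matrix Finset

theorem stmt3 {K V : Type*} [Field K] [AddCommGroup V] [Module K V] [FiniteDimensional K V]
    (A : Module.End K V) (v : V) (φ : Module.Dual K V) :
    ((∀ k : ℕ, φ ((A ^ k) v) = 0) ↔
      (∀ l : K, (A + l • φ.smulRight v).charpoly = A.charpoly)) ∧
    ((∀ k : ℕ, φ ((A ^ k) v) = 0) ↔
      (∃ l : K, l ≠ 0 ∧ (A + l • φ.smulRight v).charpoly = A.charpoly)) := by
  classical
  set b := Module.finBasis K V with hbdef
  set M := LinearMap.toMatrix b b A with hM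
  set c : Fin (Module.finrank K V) → K := fun i => b.repr v i with hc
  set r : Fin (Module.finrank K V) → K := fun j => φ (b j) with hr
  have hC : LinearMap.toMatrix b b (φ.smulRight v) = Matrix.of fun i j => c i * r j := by
    ext i j
    rw [LinearMap.toMatrix_apply]
    simp [hc, hr, mul_comm]
  have hchar : ∀ l : K, (A + l • φ.smulRight v).charpoly = A.charpoly - l • pA M c r := by
    intro l
    have htm : LinearMap.toMatrix b b (A + l • φ.smulRight v)
        = M + l • Matrix.of fun i j => c i * r j := by
      rw [map_add, LinearEquiv.map_smul, hC, hM]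
    rw [← LinearMap.charpoly_toMatrix (f := A + l • φ.smulRight v) b, htm, charpoly_add,
      hM, LinearMap.charpoly_toMatrix]
  have hs : ∀ k : ℕ, φ ((A ^ k) v) = sA M c r k := by
    intro k
    rw [sA, hM, LinearMap.toMatrix_pow]
    have hmv : LinearMap.toMatrix b b (A ^ k) *ᵥ c = ⇑(b.repr ((A ^ k) v)) := by
      rw [show c = ⇑(b.repr v) from rfl, LinearMap.toMatrix_mulVec_repr]
    rw [hmv]
    have : φ ((A ^ k) v) = φ (∑ j, b.repr ((A ^ k) v) j • b j) := by
      rw [Module.Basis.sum_repr]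
    rw [this, map_sum]
    simp [dotProduct, hr, mul_comm]
  have hiff : (∀ k : ℕ, φ ((A ^ k) v) = 0) ↔ pA M c r = 0 := by
    rw [pA_zero_iff]
    simp only [hs]
  constructor
  · rw [hiff]
    constructor
    · intro hp l
      rw [hchar l, hp, smul_zero, sub_zero]
    · intro h
      have h1 := h 1
      rw [hchar 1, one_smul] at h1
      exact sub_eq_self.mp h1
  · rw [hiff]
    constructor
    · intro hp
      exact ⟨1, one_ne_zero, by rw [hchar 1, hp, smul_zero, sub_zero]⟩
    · rintro ⟨l, hl, hE⟩
      rw [hchar l] at hE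
      exact (smul_eq_zero.mp (sub_eq_self.mp hE)).resolve_left hl
end

section
/- Let A ∈ End(V), v ∈ V, with the property that <A^k v, v> = 0 for all k ≥ 0 (with respect to a nondegenerate bilinear form identifying φ_v: u ↦ <u,v>v). Then for all λ, the characteristic polynomial of A + λ(Aφ_v + φ_v A) equals the characteristic polynomial of A. -/
open Module LinearMap

/-- If two endomorphisms of a finite-dimensional vector space agree on an invariant
subspace `W` and their difference has range inside `W`, they have the same charpoly. -/
lemma aux_charpoly_eq {K V : Type*} [Field K] [AddCommGroup V] [Module K V]
    [FiniteDimensional K V] (W : Submodule K V) (f g : Module.End K V)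
    (hfW : ∀ x ∈ W, f x ∈ W)
    (heq : ∀ x ∈ W, f x = g x)
    (hdiff : ∀ x : V, f x - g x ∈ W) :
    f.charpoly = g.charpoly := by
  classical
  obtain ⟨W', hc⟩ := Submodule.exists_isCompl W
  have : FiniteDimensional K W := inferInstance
  have : FiniteDimensional K W' := inferInstance
  let e := Submodule.prodEquivOfIsCompl W W' hc
  let bW := Module.finBasis K W
  let bW' := Module.finBasis K W'
  let bb := (bW.prod bW').map e
  have hrepr : ∀ x : V, x ∈ W → ∀ j, bb.repr x (Sum.inr j) = 0 := by
    intro x hx j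
    have hsymm : e.symm x = ((⟨x, hx⟩ : W), (0 : W')) :=
      Submodule.prodEquivOfIsCompl_symm_apply_left W W' hc (⟨x, hx⟩ : W)
    simp [bb, Basis.map_repr, hsymm]
  have hbl : ∀ i, (bb (Sum.inl i) : V) ∈ W := by
    intro i
    have h1 : bb (Sum.inl i) = e (bW.prod bW' (Sum.inl i)) := Basis.map_apply _ _ _
    rw [h1, Submodule.coe_prodEquivOfIsCompl', Basis.prod_apply_inl_fst,
      Basis.prod_apply_inl_snd]
    simpa using (bW i).2
  set Mf := LinearMap.toMatrix bb bb f with hMf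
  set Mg := LinearMap.toMatrix bb bb g with hMg
  have hf21 : Mf.toBlocks₂₁ = 0 := by
    ext j i
    simp only [Matrix.toBlocks₂₁, Matrix.of_apply, hMf, LinearMap.toMatrix_apply,
      Matrix.zero_apply]
    exact hrepr _ (hfW _ (hbl i)) j
  have hg21 : Mg.toBlocks₂₁ = 0 := by
    ext j i
    simp only [Matrix.toBlocks₂₁, Matrix.of_apply, hMg, LinearMap.toMatrix_apply,
      Matrix.zero_apply]
    rw [← heq _ (hbl i)]
    exact hrepr _ (hfW _ (hbl i)) j
  have h11 : Mf.toBlocks₁₁ = Mg.toBlocks₁₁ := by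
    ext i' i
    simp only [Matrix.toBlocks₁₁, Matrix.of_apply, hMf, hMg, LinearMap.toMatrix_apply]
    rw [heq _ (hbl i)]
  have h22 : Mf.toBlocks₂₂ = Mg.toBlocks₂₂ := by
    ext j' j
    simp only [Matrix.toBlocks₂₂, Matrix.of_apply, hMf, hMg, LinearMap.toMatrix_apply]
    have h0 := hrepr _ (hdiff (bb (Sum.inr j))) j'
    rw [map_sub] at h0
    simpa [sub_eq_zero] using h0
  rw [← LinearMap.charpoly_toMatrix f bb, ← LinearMap.charpoly_toMatrix g bb, ← hMf, ← hMg]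
  rw [← Matrix.fromBlocks_toBlocks Mf, ← Matrix.fromBlocks_toBlocks Mg, hf21, hg21,
    Matrix.charpoly_fromBlocks_zero₂₁, Matrix.charpoly_fromBlocks_zero₂₁, h11, h22]

theorem stmt10 {K V : Type*} [Field K] [AddCommGroup V] [Module K V] [FiniteDimensional K V]
    (B : V →ₗ[K] V →ₗ[K] K)
    (hnd : ∀ u : V, (∀ w : V, B u w = 0) → u = 0)
    (A : Module.End K V) (v : V)
    (h : ∀ k : ℕ, B ((A ^ k) v) v = 0) :
    ∀ l : K,
      (A + l • (A * ((B.flip v).smulRight v) + ((B.flip v).smulRight v) * A)).charpoly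
        = A.charpoly := by
  intro l
  set φ : Module.End K V := (B.flip v).smulRight v with hφ
  have hφapp : ∀ x : V, φ x = B x v • v := by
    intro x; simp [hφ]
  set W : Submodule K V := Submodule.span K (Set.range fun k : ℕ => (A ^ k) v) with hWdef
  have hvW : ∀ k : ℕ, (A ^ k) v ∈ W := fun k => Submodule.subset_span ⟨k, rfl⟩
  have hv0 : v ∈ W := by simpa using hvW 0
  have hAv : A v ∈ W := by simpa using hvW 1
  have hAW : ∀ x ∈ W, A x ∈ W := by
    have hle : Submodule.map A W ≤ W := by
      rw [hWdef, Submodule.map_span, Submodule.span_le]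
      rintro _ ⟨_, ⟨k, rfl⟩, rfl⟩
      have : A ((A ^ k) v) = (A ^ (k + 1)) v := by
        rw [pow_succ']; rfl
      rw [this]
      exact hvW (k + 1)
    intro x hx
    exact hle ⟨x, hx, rfl⟩
  have hBW : ∀ x ∈ W, B x v = 0 := by
    have hle : W ≤ LinearMap.ker (B.flip v) := by
      rw [hWdef, Submodule.span_le]
      rintro _ ⟨k, rfl⟩
      simpa using h k
    intro x hx
    simpa using hle hx
  have hφW : ∀ x ∈ W, φ x = 0 := by
    intro x hx
    rw [hφapp, hBW x hx, zero_smul]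
  set M : Module.End K V := A + l • (A * φ + φ * A) with hM
  have heq : ∀ x ∈ W, M x = A x := by
    intro x hx
    simp [hM, Module.End.mul_apply, hφW x hx, hφW _ (hAW x hx)]
  have hMW : ∀ x ∈ W, M x ∈ W := by
    intro x hx
    rw [heq x hx]
    exact hAW x hx
  have hdiff : ∀ x : V, M x - A x ∈ W := by
    intro x
    have h1 : A (φ x) ∈ W := by
      rw [hφapp, map_smul]
      exact Submodule.smul_mem _ _ hAv
    have h2 : φ (A x) ∈ W := by
      rw [hφapp]
      exact Submodule.smul_mem _ _ hv0
    have : M x - A x = l • (A (φ x) + φ (A x)) := by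
      simp [hM, Module.End.mul_apply]
    rw [this]
    exact Submodule.smul_mem _ _ (Submodule.add_mem _ h1 h2)
  exact aux_charpoly_eq W M A hMW heq hdiff
end

section
/- Let A ∈ End(V) be a unitary/symplectic-type Lie algebra element and v ∈ V with φ_v the rank-one operator u ↦ <u,v>v. If φ_v lies in the image of the adjoint map B ↦ [A,B] on g(V), then <A^k v, v> = 0 for all k ≥ 0. -/
theorem stmt11 {K V : Type*} [Field K] [AddCommGroup V] [Module K V] [FiniteDimensional K V]
    (h2 : (2 : K) ≠ 0)
    (σ : K →+* K) (hσ : ∀ a, σ (σ a) = a)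
    (B : V →ₗ[K] V →ₛₗ[σ] K)
    (hnd : ∀ u : V, (∀ w : V, B u w = 0) → u = 0)
    (A : Module.End K V)
    (hA : ∀ u w : V, B (A u) w = - B u (A w))
    (v : V)
    (h : ∃ C : Module.End K V, (∀ u w : V, B (C u) w = - B u (C w)) ∧
      (LinearMap.smulRight (B.flip v) v : Module.End K V) = A * C - C * A) :
    ∀ k : ℕ, B ((A ^ k) v) v = 0 := by
  obtain ⟨C, -, hC⟩ := h
  have key : ∀ w : V, LinearMap.trace K V (LinearMap.smulRight (B.flip v) w) = B w v := by
    intro w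
    have : (LinearMap.smulRight (B.flip v) w : Module.End K V)
        = dualTensorHom K V V ((B.flip v) ⊗ₜ w) := by
      ext u; simp [dualTensorHom_apply]
    rw [this, LinearMap.trace_eq_contract_apply, contractLeft_apply]
    rfl
  intro k
  have h1 : (A ^ k : Module.End K V) * LinearMap.smulRight (B.flip v) v
      = LinearMap.smulRight (B.flip v) ((A ^ k) v) := by
    ext u; simp
  have h2' : LinearMap.trace K V ((A ^ k) * (A * C - C * A)) = 0 := by
    rw [mul_sub, map_sub, ← mul_assoc, ← mul_assoc, ← pow_succ,
      LinearMap.trace_mul_comm K (A ^ k * C) A, ← mul_assoc, ← pow_succ', sub_self]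
  rw [← key, ← h1, hC, h2']
end

section
/- Let A ∈ End(V) with A* = -A with respect to a nondegenerate symmetric or Hermitian form, f an irreducible polynomial with f* = ±f, and suppose the minimal polynomial of A is f^d. Let V_i = ker f(A)^i. Then for each 0 ≤ i ≤ d, the orthogonal complement of V_i equals f(A)^i V. -/
open Polynomial

section Aux

variable {K : Type*} [Field K] (σ : K →+* K)

/-- Coordinatewise conjugation on finsupps, as a semilinear equivalence. -/
noncomputable def conjFinsupp (hσ : ∀ a, σ (σ a) = a) [RingHomInvPair σ σ] (ι : Type*) :
    (ι →₀ K) ≃ₛₗ[σ] (ι →₀ K) where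
  toFun := Finsupp.mapRange σ σ.map_zero
  invFun := Finsupp.mapRange σ σ.map_zero
  left_inv := fun l => by ext i; simp [hσ]
  right_inv := fun l => by ext i; simp [hσ]
  map_add' := fun l₁ l₂ => by ext i; simp
  map_smul' := fun c l => by ext i; simp [Finsupp.smul_apply, smul_eq_mul]

lemma finrank_eq_of_semilinear (hσ : ∀ a, σ (σ a) = a) [RingHomInvPair σ σ]
    [RingHomCompTriple σ σ (RingHom.id K)]
    {M N : Type*} [AddCommGroup M] [Module K M] [AddCommGroup N] [Module K N]
    (e : M ≃ₛₗ[σ] N) : Module.finrank K M = Module.finrank K N := by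
  classical
  let b := Module.Basis.ofVectorSpace K M
  let e2 : N ≃ₗ[K] ((Module.Basis.ofVectorSpaceIndex K M) →₀ K) :=
    (e.symm.trans b.repr).trans (conjFinsupp σ hσ _)
  rw [b.repr.finrank_eq, e2.finrank_eq]

end Aux

theorem stmt14 {K V : Type*} [Field K] [AddCommGroup V] [Module K V] [FiniteDimensional K V]
    (σ : K →+* K) (hσ : ∀ a, σ (σ a) = a)
    (B : V →ₗ[K] V →ₛₗ[σ] K)
    (hherm : ∀ u v : V, B u v = σ (B v u))
    (hnd : ∀ u : V, (∀ w : V, B u w = 0) → u = 0)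
    (A : Module.End K V)
    (hA : ∀ u w : V, B (A u) w = - B u (A w))
    (f : K[X]) (hf : Irreducible f)
    (hfs : (f.map σ).comp (-X) = f ∨ (f.map σ).comp (-X) = -f)
    (d : ℕ) (hmin : minpoly K A = f ^ d) :
    ∀ i ≤ d, ∀ u : V,
      (∀ w : V, ((aeval A f) ^ i) w = 0 → B u w = 0) ↔
        u ∈ LinearMap.range ((aeval A f) ^ i) := by
  haveI hip : RingHomInvPair σ σ := ⟨by ext a; exact hσ a, by ext a; exact hσ a⟩
  haveI hct : RingHomCompTriple σ σ (RingHom.id K) := ⟨by ext a; exact hσ a⟩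
  haveI hrs : RingHomSurjective σ := ⟨fun a => ⟨σ a, hσ a⟩⟩
  -- powers of A move across B with a sign
  have hpow : ∀ (n : ℕ) (u w : V), B ((A ^ n) u) w = (-1 : K) ^ n * B u ((A ^ n) w) := by
    intro n
    induction n with
    | zero => intro u w; simp
    | succ n ih =>
      intro u w
      have h1 : (A ^ (n + 1)) u = (A ^ n) (A u) := by rw [pow_succ]; rfl
      have h2 : A ((A ^ n) w) = (A ^ (n + 1)) w := by rw [pow_succ']; rfl
      rw [h1, ih (A u) w, hA u ((A ^ n) w), h2]
      ring
  -- the adjoint of p(A) is p*(A)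
  have hadj : ∀ p : K[X], ∀ u w : V,
      B ((aeval A p) u) w = B u ((aeval A ((p.map σ).comp (-X))) w) := by
    intro p
    induction p using Polynomial.induction_on' with
    | add p q hp hq =>
      intro u w
      simp only [Polynomial.map_add, Polynomial.add_comp, map_add, LinearMap.add_apply]
      rw [hp u w, hq u w]
    | monomial n a =>
      intro u w
      have hm : ((Polynomial.monomial n a).map σ).comp (-X)
          = Polynomial.C (σ a * (-1) ^ n) * X ^ n := by
        rw [Polynomial.map_monomial, ← Polynomial.C_mul_X_pow_eq_monomial, Polynomial.mul_comp,
          Polynomial.C_comp, Polynomial.pow_comp, Polynomial.X_comp, neg_pow, map_mul,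
          show ((-1 : K[X])) = Polynomial.C (-1 : K) by simp, ← Polynomial.C_pow]
        ring
      rw [hm]
      simp only [map_mul, aeval_C, aeval_X_pow, aeval_monomial, Module.End.mul_apply,
        Module.algebraMap_end_apply, LinearMap.map_smulₛₗ, LinearMap.smul_apply]
      rw [hpow n u w]
      simp only [map_mul, hσ, map_pow, map_neg, map_one, smul_eq_mul, RingHom.id_apply]
      ring
  intro i _ u
  set T : Module.End K V := (aeval A f) ^ i with hT
  -- B (T u) w = ε * B u (T w) for a nonzero sign ε
  obtain ⟨ε, hε0, hε⟩ : ∃ ε : K, ε ≠ 0 ∧ ∀ u w : V, B (T u) w = ε * B u (T w) := by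
    have h0 : ∀ u w : V, B (T u) w = B u ((aeval A (((f.map σ).comp (-X)) ^ i)) w) := by
      intro u w
      have h := hadj (f ^ i) u w
      rw [Polynomial.map_pow, Polynomial.pow_comp] at h
      rw [hT, ← map_pow]
      exact h
    rcases hfs with h | h
    · refine ⟨1, one_ne_zero, fun u w => ?_⟩
      rw [h0, h, one_mul, map_pow, ← hT]
    · refine ⟨(-1 : K) ^ i, pow_ne_zero _ (by norm_num : (-1 : K) ≠ 0), fun u w => ?_⟩
      rw [h0, h]
      have hend : aeval A ((-f) ^ i) = ((-1 : K) ^ i) • T := by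
        rw [map_pow, map_neg, hT, neg_pow,
          show (-1 : Module.End K V) = (-1 : K) • 1 by simp, _root_.smul_pow, one_pow,
          smul_mul_assoc, one_mul]
      rw [hend]
      simp only [LinearMap.smul_apply, LinearMap.map_smulₛₗ, map_pow, map_neg, map_one,
        smul_eq_mul]
  constructor
  · -- hard direction: orthogonal to ker T implies in range T
    intro h
    let b := Module.Basis.ofVectorSpace K V
    let conj : V ≃ₛₗ[σ] V := (b.repr.trans (conjFinsupp σ hσ _)).trans b.repr.symm
    let Φ : V →ₗ[K] Module.Dual K V :=
      { toFun := fun u => LinearMap.comp (σ₁₃ := RingHom.id K) (B u) (conj : V →ₛₗ[σ] V)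
        map_add' := fun u v => by ext w; simp
        map_smul' := fun c u => by ext w; simp }
    have hΦapp : ∀ u w : V, Φ u w = B u (conj w) := fun u w => rfl
    have hΦker : LinearMap.ker Φ = ⊥ := by
      rw [LinearMap.ker_eq_bot']
      intro m hm
      apply hnd
      intro w
      have := LinearMap.congr_fun hm (conj.symm w)
      simpa [hΦapp, conj.apply_symm_apply] using this
    have hΦrange : LinearMap.range Φ = ⊤ := by
      rw [← LinearMap.ker_eq_bot_iff_range_eq_top_of_finrank_eq_finrank
        (Subspace.dual_finrank_eq (K := K) (V := V)).symm]
      exact hΦker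
    let eΦ : V ≃ₗ[K] Module.Dual K V :=
      LinearEquiv.ofBijective Φ ⟨LinearMap.ker_eq_bot.mp hΦker, LinearMap.range_eq_top.mp hΦrange⟩
    set W : Submodule K V := LinearMap.ker T with hW
    set W' : Submodule K V := W.comap (conj : V →ₛₗ[σ] V) with hW'
    -- the orthogonal complement of W, as a comap through Φ
    set S : Submodule K V := W'.dualAnnihilator.comap Φ with hSdef
    have hfrW : Module.finrank K W' = Module.finrank K W := by
      refine finrank_eq_of_semilinear σ hσ (M := W') (N := W) ?_
      exact
        { toFun := fun x => ⟨conj x.1, x.2⟩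
          invFun := fun y => ⟨conj.symm y.1, by
            simp only [hW', Submodule.mem_comap]
            simpa [conj.apply_symm_apply] using y.2⟩
          left_inv := fun x => Subtype.ext (conj.symm_apply_apply x.1)
          right_inv := fun y => Subtype.ext (conj.apply_symm_apply y.1)
          map_add' := fun x y => Subtype.ext (map_add conj x.1 y.1)
          map_smul' := fun c x => Subtype.ext (conj.toLinearMap.map_smulₛₗ c x.1) }
    have hfrS : Module.finrank K S = Module.finrank K W'.dualAnnihilator := by
      have hcomap : S = W'.dualAnnihilator.map (eΦ.symm : Module.Dual K V →ₗ[K] V) := by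
        rw [hSdef, show Φ = (eΦ : V →ₗ[K] Module.Dual K V) from rfl,
          Submodule.comap_equiv_eq_map_symm]
      rw [hcomap, LinearEquiv.finrank_map_eq]
    have hfrAnn : Module.finrank K W'.dualAnnihilator
        = Module.finrank K V - Module.finrank K W' := by
      have h1 := LinearEquiv.finrank_eq (R := K) (M := V ⧸ W')
        (N := { x // x ∈ Submodule.dualAnnihilator W' }) (Subspace.quotEquivAnnihilator W')
      have h2 := Submodule.finrank_quotient_add_finrank W'
      have h3 := W'.finrank_le
      omega
    have hfrR : Module.finrank K (LinearMap.range T)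
        = Module.finrank K V - Module.finrank K W := by
      have h2 := LinearMap.finrank_range_add_finrank_ker T
      have h3 := W.finrank_le
      rw [hW]
      omega
    have hle : LinearMap.range T ≤ S := by
      rintro x ⟨v, rfl⟩
      simp only [hSdef, Submodule.mem_comap, Submodule.mem_dualAnnihilator]
      intro w hw
      rw [hΦapp, hε v (conj w)]
      have : T (conj w) = 0 := hw
      rw [this, map_zero, mul_zero]
    have heq : LinearMap.range T = S := by
      refine Submodule.eq_of_le_of_finrank_le hle ?_
      rw [hfrS, hfrAnn, hfrW, hfrR]
    rw [heq]
    simp only [hSdef, Submodule.mem_comap, Submodule.mem_dualAnnihilator]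
    intro w hw
    rw [hΦapp]
    exact h (conj w) hw
  · rintro ⟨v, rfl⟩ w hw
    rw [hε v w, hw, map_zero, mul_zero]
end

section
/- Let A be a nilpotent antisymmetric operator with respect to a nondegenerate symmetric bilinear form on V, whose minimal polynomial equals its characteristic polynomial x^d (A is regular nilpotent and V = span(e, Ae, ..., A^{d-1}e)). Then d is odd. -/
theorem stmt15 {F V : Type*} [Field F] [AddCommGroup V] [Module F V] [FiniteDimensional F V]
    (h2 : (2 : F) ≠ 0)
    (B : V →ₗ[F] V →ₗ[F] F)
    (hsymm : ∀ u v : V, B u v = B v u)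
    (hnd : ∀ u : V, (∀ w : V, B u w = 0) → u = 0)
    (A : Module.End F V)
    (hA : ∀ u v : V, B (A u) v = - B u (A v))
    (d : ℕ) (hd : Module.finrank F V = d)
    (hnil : A ^ d = 0) (hreg : A ^ (d - 1) ≠ 0)
    (e : V)
    (hcyc : Submodule.span F (Set.range fun i : ℕ => (A ^ i) e) = ⊤) :
    Odd d := by
  classical
  have key : ∀ (i : ℕ) (u v : V), B ((A ^ i) u) v = (-1 : F) ^ i * B u ((A ^ i) v) := by
    intro i
    induction i with
    | zero => intro u v; simp
    | succ n ih =>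
      intro u v
      have h1 : (A ^ (n + 1)) u = (A ^ n) (A u) := by rw [pow_succ]; rfl
      have h2v : (A ^ (n + 1)) v = A ((A ^ n) v) := by rw [pow_succ']; rfl
      rw [h1, ih (A u) v, hA, h2v, pow_succ]
      ring
  by_contra hodd
  have hev : Even d := Nat.not_odd_iff_even.mp hodd
  have hd0 : d ≠ 0 := by
    rintro rfl
    exact hreg (by simpa using hnil)
  have hdodd : Odd (d - 1) := Nat.Even.sub_odd (Nat.one_le_iff_ne_zero.mpr hd0) hev odd_one
  set c : F := B e ((A ^ (d - 1)) e) with hc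
  have hc1 : c = -c := by
    have h1 : B ((A ^ (d - 1)) e) e = (-1 : F) ^ (d - 1) * c := key _ e e
    have h2' : B ((A ^ (d - 1)) e) e = c := hsymm _ _
    rw [h2', Odd.neg_one_pow hdodd] at h1
    linear_combination h1
  have hc0 : c = 0 := by
    have h2c : (2 : F) * c = 0 := by linear_combination hc1
    rcases mul_eq_zero.mp h2c with h | h
    · exact absurd h h2
    · exact h
  -- A^{d-1} e is orthogonal to every generator
  have horthgen : ∀ j : ℕ, B ((A ^ (d - 1)) e) ((A ^ j) e) = 0 := by
    intro j
    rw [key]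
    cases j with
    | zero =>
      simpa using hc0
    | succ m =>
      have hz : (A ^ (d - 1)) ((A ^ (m + 1)) e) = 0 := by
        have hmul : A ^ (d - 1) * A ^ (m + 1) = A ^ m * A ^ d := by
          rw [← pow_add, ← pow_add]
          congr 1
          omega
        calc (A ^ (d - 1)) ((A ^ (m + 1)) e) = (A ^ (d - 1) * A ^ (m + 1)) e := rfl
          _ = (A ^ m * A ^ d) e := by rw [hmul]
          _ = (A ^ m) ((A ^ d) e) := rfl
          _ = 0 := by rw [hnil]; simp
      rw [hz]
      simp
  have horth : ∀ w : V, B ((A ^ (d - 1)) e) w = 0 := by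
    intro w
    have hle : Submodule.span F (Set.range fun i : ℕ => (A ^ i) e) ≤
        LinearMap.ker (B ((A ^ (d - 1)) e)) := by
      rw [Submodule.span_le]
      rintro _ ⟨j, rfl⟩
      exact horthgen j
    rw [hcyc] at hle
    exact hle (Submodule.mem_top)
  have he0 : (A ^ (d - 1)) e = 0 := hnd _ horth
  apply hreg
  have hker : ∀ w : V, (A ^ (d - 1)) w = 0 := by
    intro w
    have hle : Submodule.span F (Set.range fun i : ℕ => (A ^ i) e) ≤
        LinearMap.ker (A ^ (d - 1) : V →ₗ[F] V) := by
      rw [Submodule.span_le]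
      rintro _ ⟨j, rfl⟩
      have hcomm : (A ^ (d - 1)) ((A ^ j) e) = (A ^ j) ((A ^ (d - 1)) e) := by
        have : A ^ (d - 1) * A ^ j = A ^ j * A ^ (d - 1) := by
          rw [← pow_add, ← pow_add, Nat.add_comm]
        calc (A ^ (d - 1)) ((A ^ j) e) = (A ^ (d - 1) * A ^ j) e := rfl
          _ = (A ^ j * A ^ (d - 1)) e := by rw [this]
          _ = (A ^ j) ((A ^ (d - 1)) e) := rfl
      simp only [SetLike.mem_coe, LinearMap.mem_ker]
      rw [hcomm, he0]
      simp
    rw [hcyc] at hle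
    exact hle (Submodule.mem_top)
  exact LinearMap.ext hker
end

section
/- Let A ∈ End(V) be cyclic with cyclic vector e (V = span(e, Ae, A^2e, ...)) and preserve a nondegenerate bilinear form in the sense that A* = -A. Then the map T: g(A)e ↦ g(-A)e (for polynomials g) is a well-defined isometry of the form satisfying TAT^{-1} = -A, provided the minimal polynomial f^d of A satisfies f(-x) = ±f(x). -/
open Polynomial

noncomputable def evalMap {K V : Type*} [Field K] [AddCommGroup V] [Module K V]
    (A : Module.End K V) (e : V) : K[X] →ₗ[K] V where
  toFun g := aeval A g e
  map_add' g h := by simp [map_add]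
  map_smul' c g := by simp

lemma adj_pow {K V : Type*} [Field K] [AddCommGroup V] [Module K V]
    (B : V →ₗ[K] V →ₗ[K] K) (A : Module.End K V)
    (hA : ∀ u v : V, B (A u) v = - B u (A v)) :
    ∀ (n : ℕ) (x y : V), B ((A ^ n) x) y = B x (((-A) ^ n) y) := by
  intro n
  induction n with
  | zero => intro x y; simp
  | succ n ih =>
    intro x y
    have h1 : (A ^ (n+1)) x = A ((A ^ n) x) := by
      rw [pow_succ']; rfl
    have h2 : ((-A) ^ (n+1)) y = ((-A) ^ n) (-(A y)) := by
      rw [pow_succ]; rfl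
    rw [h1, hA, ih x (A y), h2]
    simp

lemma adj_poly {K V : Type*} [Field K] [AddCommGroup V] [Module K V]
    (B : V →ₗ[K] V →ₗ[K] K) (A : Module.End K V)
    (hA : ∀ u v : V, B (A u) v = - B u (A v)) :
    ∀ (p : K[X]) (x y : V), B ((aeval A p) x) y = B x ((aeval (-A) p) y) := by
  intro p
  induction p using Polynomial.induction_on' with
  | add p q hp hq =>
    intro x y; simp [map_add, LinearMap.add_apply, hp, hq]
  | monomial n c =>
    intro x y
    simp only [aeval_monomial]
    have : ∀ (A' : Module.End K V) (z : V),
        ((algebraMap K (Module.End K V)) c * A' ^ n) z = c • ((A' ^ n) z) := by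
      intro A' z; simp [Module.algebraMap_end_eq_smul_id]
    rw [this A x, this (-A) y, map_smul, map_smul, LinearMap.smul_apply, adj_pow B A hA n x y]

theorem stmt18 {K V : Type*} [Field K] [AddCommGroup V] [Module K V] [FiniteDimensional K V]
    (h2 : (2 : K) ≠ 0)
    (B : V →ₗ[K] V →ₗ[K] K)
    (hsymm : ∀ u v : V, B u v = B v u)
    (hnd : ∀ u : V, (∀ w : V, B u w = 0) → u = 0)
    (A : Module.End K V)
    (hA : ∀ u v : V, B (A u) v = - B u (A v))
    (e : V)
    (hcyc : Submodule.span K (Set.range fun i : ℕ => (A ^ i) e) = ⊤)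
    (f : K[X]) (d : ℕ) (hmin : minpoly K A = f ^ d)
    (hf : f.comp (-X) = f ∨ f.comp (-X) = -f) :
    ∃ T : Module.End K V,
      (∀ g : K[X], T ((aeval A g) e) = (aeval A (g.comp (-X))) e) ∧
      (∀ u v : V, B (T u) (T v) = B u v) ∧
      (∀ u : V, T (A u) = - A (T u)) := by
  -- notation
  set ψ : K[X] →ₗ[K] V := evalMap A e with hψ
  set χ : K[X] →ₗ[K] V := evalMap (-A) e with hχ
  have hψ_apply : ∀ g, ψ g = aeval A g e := fun g => rfl
  have hχ_apply : ∀ g, χ g = aeval (-A) g e := fun g => rfl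
  have hcompX : ∀ g : K[X], aeval A (g.comp (-X)) = aeval (-A) g := by
    intro g; rw [aeval_comp]; simp
  -- surjectivity of ψ
  have hsurj : Function.Surjective ψ := by
    rw [← LinearMap.range_eq_top]
    rw [eq_top_iff, ← hcyc]
    rw [Submodule.span_le]
    rintro _ ⟨i, rfl⟩
    exact ⟨X ^ i, by simp [hψ_apply]⟩
  -- kernel containment
  have hker : LinearMap.ker ψ ≤ LinearMap.ker χ := by
    intro g hg
    simp only [LinearMap.mem_ker, hψ_apply] at hg
    -- aeval A g = 0
    have hg0 : aeval A g = 0 := by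
      apply LinearMap.ext
      intro v
      have hv : v ∈ Submodule.span K (Set.range fun i : ℕ => (A ^ i) e) := by
        rw [hcyc]; trivial
      induction hv using Submodule.span_induction with
      | mem x hx =>
        obtain ⟨i, rfl⟩ := hx
        have hcomm : aeval A g * A ^ i = A ^ i * aeval A g := by
          have := ((Commute.all g (X ^ i)).map (aeval A)).eq
          simpa using this
        have : (aeval A g) ((A ^ i) e) = (A ^ i) ((aeval A g) e) :=
          congrFun (congrArg DFunLike.coe hcomm) e
        rw [this, hg, map_zero]; rfl
      | zero => simp
      | add x y _ _ hx hy => simp [hx, hy]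
      | smul c x _ hx => simp [hx]
    have hdvd : minpoly K A ∣ g := minpoly.dvd K A hg0
    obtain ⟨q, hq⟩ := hdvd
    simp only [LinearMap.mem_ker, hχ_apply, ← hcompX]
    have : g.comp (-X) = (f.comp (-X)) ^ d * q.comp (-X) := by
      rw [hq, hmin]; simp [mul_comp, pow_comp]
    rw [this]
    have hfd : (aeval A f) ^ d = 0 := by
      have := minpoly.aeval K A
      rw [hmin] at this
      simpa [map_pow] using this
    have hfc : aeval A (f.comp (-X)) ^ d = 0 := by
      rcases hf with h | h
      · rw [h]; exact hfd
      · rw [h, map_neg, neg_pow]; simp [hfd]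
    simp only [map_mul, map_pow, hfc, zero_mul, LinearMap.zero_apply]
  -- build T
  let Q := LinearMap.quotKerEquivOfSurjective ψ hsurj
  let T : Module.End K V := (Submodule.liftQ (LinearMap.ker ψ) χ hker) ∘ₗ Q.symm.toLinearMap
  have hT : ∀ g : K[X], T (ψ g) = χ g := by
    intro g
    have hQ : Q (Submodule.Quotient.mk g) = ψ g := rfl
    have : Q.symm (ψ g) = Submodule.Quotient.mk g := by
      rw [← hQ, LinearEquiv.symm_apply_apply]
    simp only [T, LinearMap.comp_apply, LinearEquiv.coe_toLinearMap, this]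
    exact Submodule.liftQ_apply _ _ _
  refine ⟨T, ?_, ?_, ?_⟩
  · intro g
    rw [← hψ_apply, hT, hχ_apply, hcompX]
  · intro u v
    obtain ⟨g, rfl⟩ := hsurj u
    obtain ⟨h, rfl⟩ := hsurj v
    rw [hT g, hT h, hχ_apply, hχ_apply, hψ_apply, hψ_apply]
    have hA' : ∀ u v : V, B ((-A) u) v = - B u ((-A) v) := by
      intro u v; simp [hA]
    have key : ∀ p : K[X], B e ((aeval A p) e) = B e ((aeval (-A) p) e) := by
      intro p
      rw [hsymm, adj_poly B A hA p]
    calc B ((aeval (-A) g) e) ((aeval (-A) h) e)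
        = B e ((aeval A g) ((aeval (-A) h) e)) := by
          rw [adj_poly B (-A) hA' g]; rw [neg_neg]
      _ = B e ((aeval A (g * h.comp (-X))) e) := by
          rw [map_mul]; rw [hcompX h]; rfl
      _ = B e ((aeval (-A) (g * h.comp (-X))) e) := key _
      _ = B e ((aeval A ((g * h.comp (-X)).comp (-X))) e) := by rw [hcompX]
      _ = B e ((aeval A (g.comp (-X) * h)) e) := by
          congr 2
          rw [mul_comp, comp_assoc]
          simp
      _ = B e ((aeval (-A) g) ((aeval A h) e)) := by
          rw [map_mul, hcompX g]; rfl
      _ = B ((aeval A g) e) ((aeval A h) e) := by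
          rw [adj_poly B A hA g]
  · intro u
    obtain ⟨g, rfl⟩ := hsurj u
    have h1 : A (ψ g) = ψ (X * g) := by
      simp only [hψ_apply, map_mul, aeval_X]; rfl
    rw [h1, hT, hT, hχ_apply, hχ_apply, map_mul, aeval_X]
    simp
end

section
/- Let A ∈ End(V) with minimal polynomial f^d for f irreducible, and suppose V is 'homogeneous': f(A)^j V = ker f(A)^{d-j} for all 0 ≤ j ≤ d. Then the rational canonical form of A consists of cyclic blocks all of the same size, i.e. V is a free module over K[x]/(f^d) via A. -/
open Polynomial
open scoped DirectSum

universe u v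

set_option maxHeartbeats 2000000 in
theorem stmt19_aux {K : Type u} {V : Type v} [Field K] [AddCommGroup V] [Module K V]
    [FiniteDimensional K V]
    (A : Module.End K V) (f : K[X]) (hf : Irreducible f) (d : ℕ)
    (hmin : minpoly K A = f ^ d)
    (hhom : ∀ j ≤ d, LinearMap.range ((aeval A f) ^ j) = LinearMap.ker ((aeval A f) ^ (d - j))) :
    ∃ (k : ℕ) (e : Fin k → V), ∀ v : V,
      ∃! g : Fin k → Polynomial.degreeLT K (d * f.natDegree),
        v = ∑ i, (aeval A ((g i : K[X]))) (e i) := by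
  classical
  have haev : aeval A (f ^ d) = 0 := by rw [← hmin]; exact minpoly.aeval K A
  rcases Nat.eq_zero_or_pos d with hd0 | hd
  · subst hd0
    have h1 : (1 : Module.End K V) = 0 := by simpa using haev
    have hV : ∀ v : V, v = 0 := fun v => by
      simpa using LinearMap.ext_iff.mp h1 v
    exact ⟨0, Fin.elim0, fun v => ⟨fun i => i.elim0, by simpa using hV v,
      fun y _ => funext fun i => i.elim0⟩⟩
  set m := d * f.natDegree with hm
  have hfne : f ≠ 0 := hf.ne_zero
  have hfdne : f ^ d ≠ 0 := pow_ne_zero d hfne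
  -- the monic generator of (f^d)
  set F : K[X] := f ^ d * C (f ^ d).leadingCoeff⁻¹ with hF
  have hFmonic : F.Monic := monic_mul_leadingCoeff_inv hfdne
  have hFdeg : F.degree = (m : ℕ) := by
    rw [hF, degree_mul_leadingCoeff_inv _ hfdne, degree_pow, degree_eq_natDegree hfne]
    simp [hm, mul_comm]
  have hFassoc : Associated (f ^ d) F := by
    refine associated_mul_unit_right _ _ ?_
    exact isUnit_C.mpr (isUnit_iff_ne_zero.mpr (inv_ne_zero (leadingCoeff_ne_zero.mpr hfdne)))
  -- the K[X]-module structure on V via A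
  have hsmul : ∀ (q : K[X]) (x : Module.AEval' A), q • x =
      (Module.AEval'.of A) ((aeval A q) ((Module.AEval'.of A).symm x)) := by
    intro q x
    rw [← Module.End.smul_def (aeval A q), ← Module.AEval.of_symm_smul,
      LinearEquiv.apply_symm_apply]
  have htors : Module.IsTorsion K[X] (Module.AEval' A) := by
    intro x
    refine ⟨⟨f ^ d, mem_nonZeroDivisors_of_ne_zero hfdne⟩, ?_⟩
    show (f ^ d : K[X]) • x = 0
    rw [hsmul, haev]; simp
  haveI : Module.Finite K[X] (ULift.{u} (Module.AEval' A)) :=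
    Module.Finite.equiv (ULift.moduleEquiv (R := K[X]) (M := Module.AEval' A)).symm
  have htors' : Module.IsTorsion K[X] (ULift.{u} (Module.AEval' A)) := by
    intro x
    obtain ⟨a, ha⟩ := @htors ((ULift.moduleEquiv : ULift.{u} (Module.AEval' A) ≃ₗ[K[X]] _) x)
    refine ⟨a, ?_⟩
    apply (ULift.moduleEquiv (R := K[X]) (M := Module.AEval' A)).injective
    rw [Submonoid.smul_def, map_smul, map_zero]
    exact ha
  obtain ⟨ι, hι, p, hp, e, ⟨E0⟩⟩ := Module.equiv_directSum_of_isTorsion htors'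
  haveI := hι
  haveI := Classical.decEq ι
  set Q : ι → Type u := fun i => K[X] ⧸ (K[X] ∙ (p i ^ e i)) with hQ
  let E : Module.AEval' A ≃ₗ[K[X]] ⨁ i, Q i :=
    (ULift.moduleEquiv).symm.trans E0
  set of := Module.AEval'.of A with hof
  -- membership in the span is divisibility
  have hmemdvd : ∀ (g h : K[X]), h ∈ (K[X] ∙ g) ↔ g ∣ h := by
    intro g h
    constructor
    · intro hmem
      obtain ⟨c, rfl⟩ := Submodule.mem_span_singleton.mp hmem; exact ⟨c, mul_comm _ _⟩
    · intro hdvd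
      exact Submodule.mem_span_singleton.mpr
        (by obtain ⟨c, rfl⟩ := hdvd; exact ⟨c, mul_comm _ _⟩)
  -- generators
  set gen : ι → (⨁ i, Q i) := fun i => DirectSum.lof K[X] ι Q i (Submodule.Quotient.mk 1)
    with hgen
  have hqsmul : ∀ (q : K[X]) (i : ι), q • gen i
      = DirectSum.lof K[X] ι Q i (Submodule.Quotient.mk q) := by
    intro q i
    rw [hgen, ← map_smul, ← Submodule.Quotient.mk_smul, smul_eq_mul, mul_one]
  have hlofz : ∀ (i : ι) (z : Q i), DirectSum.lof K[X] ι Q i z = 0 → z = 0 := by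
    intro i z h
    have := congrArg (fun w : ⨁ i, Q i => w i) h
    simpa using this
  -- each p i ^ e i divides f ^ d
  have hstepA : ∀ i : ι, p i ^ e i ∣ f ^ d := by
    intro i
    have h0 : (f ^ d : K[X]) • (E.symm (gen i)) = 0 := by rw [hsmul, haev]; simp
    have h1 : (f ^ d : K[X]) • gen i = 0 := by
      have := congrArg E h0
      rw [map_smul, LinearEquiv.apply_symm_apply, map_zero] at this
      exact this
    rw [hqsmul] at h1
    have h2 := hlofz _ _ h1
    rw [Submodule.Quotient.mk_eq_zero] at h2
    exact (hmemdvd _ _).mp h2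
  have hndpos : 0 < f.natDegree := hf.natDegree_pos
  -- p i is associated to f when e i ≠ 0
  have hstepB : ∀ i : ι, e i ≠ 0 → Associated (p i) f := by
    intro i hei
    have hdvd : p i ∣ f ^ d := dvd_trans (dvd_pow_self (p i) hei) (hstepA i)
    have hprime : Prime (p i) := (hp i).prime
    exact (hp i).associated_of_dvd hf (hprime.dvd_of_dvd_pow hdvd)
  -- e i = d when e i ≠ 0, using homogeneity
  have hstepC : ∀ i : ι, e i ≠ 0 → e i = d := by
    intro i hei
    have hassoc := hstepB i hei
    have hassocpow : ∀ n : ℕ, Associated (p i ^ n) (f ^ n) := fun n => hassoc.pow_pow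
    have hfe : f ^ e i ∣ f ^ d := (hassocpow (e i)).symm.dvd.trans (hstepA i)
    have heled : e i ≤ d := by
      have := Polynomial.natDegree_le_of_dvd hfe hfdne
      rw [natDegree_pow, natDegree_pow] at this
      exact Nat.le_of_mul_le_mul_right (by simpa [mul_comm] using this) hndpos
    by_contra hne
    have heltd : e i < d := lt_of_le_of_ne heled hne
    -- f ^ (e i) kills the generator
    have h0 : (f ^ e i : K[X]) • gen i = 0 := by
      rw [hqsmul]
      have : Submodule.Quotient.mk (p := (K[X] ∙ (p i ^ e i))) (f ^ e i) = 0 := by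
        rw [Submodule.Quotient.mk_eq_zero]
        exact (hmemdvd _ _).mpr (hassocpow (e i)).dvd
      rw [this, map_zero]
    have h1 : aeval A (f ^ e i) (of.symm (E.symm (gen i))) = 0 := by
      have h2 : (f ^ e i : K[X]) • (E.symm (gen i)) = 0 := by
        apply E.injective
        rw [map_smul, LinearEquiv.apply_symm_apply, map_zero]
        exact h0
      rw [hsmul] at h2
      have := congrArg of.symm h2
      rwa [LinearEquiv.symm_apply_apply, map_zero] at this
    -- use homogeneity
    have hker : of.symm (E.symm (gen i)) ∈ LinearMap.ker ((aeval A f) ^ (d - (d - e i))) := by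
      have hde : d - (d - e i) = e i := by omega
      rw [hde, LinearMap.mem_ker, ← map_pow]
      exact h1
    rw [← hhom (d - e i) (Nat.sub_le d _)] at hker
    obtain ⟨y, hy⟩ := hker
    -- gen i = f^(d - e i) • E (of y)
    have h3 : gen i = (f ^ (d - e i) : K[X]) • E (of y) := by
      have h4 : (f ^ (d - e i) : K[X]) • (of y) = E.symm (gen i) := by
        rw [hsmul, LinearEquiv.symm_apply_apply, map_pow]
        rw [hy]
        exact (LinearEquiv.apply_symm_apply of _)
      calc gen i = E (E.symm (gen i)) := (LinearEquiv.apply_symm_apply E _).symm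
        _ = E ((f ^ (d - e i) : K[X]) • (of y)) := by rw [h4]
        _ = (f ^ (d - e i) : K[X]) • E (of y) := map_smul _ _ _
    -- look at the i-th component
    have h5 : (Submodule.Quotient.mk 1 : Q i) = (f ^ (d - e i) : K[X]) • ((E (of y)) i) := by
      have h3' := congrArg (fun w : ⨁ i, Q i => w i) h3
      simp only [hgen] at h3'
      rwa [DirectSum.lof_apply, DirectSum.smul_apply] at h3'
    obtain ⟨q, hq⟩ := Submodule.Quotient.mk_surjective _ ((E (of y)) i)
    rw [← hq, ← Submodule.Quotient.mk_smul, smul_eq_mul] at h5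
    have h6 : p i ^ e i ∣ 1 - f ^ (d - e i) * q :=
      (hmemdvd _ _).mp ((Submodule.Quotient.eq _).mp h5)
    have h7 : f ∣ 1 - f ^ (d - e i) * q :=
      (hassoc.symm.dvd.trans (dvd_pow_self (p i) hei)).trans h6
    have h8 : f ∣ f ^ (d - e i) * q :=
      (dvd_pow_self f (Nat.sub_ne_zero_of_lt heltd)).mul_right q
    have : f ∣ 1 := by
      have := dvd_add h7 h8
      simpa using this
    exact hf.not_isUnit (isUnit_of_dvd_one this)
  -- the span is generated by F for e i ≠ 0
  have hFdvd : ∀ i : ι, e i ≠ 0 → ∀ h : K[X], (h ∈ (K[X] ∙ (p i ^ e i)) ↔ F ∣ h) := by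
    intro i hei h
    rw [hmemdvd]
    have hA : Associated (p i ^ e i) F := by
      have h1 : Associated (p i ^ e i) (f ^ e i) := (hstepB i hei).pow_pow
      have h2 : Associated (f ^ e i) F := by rw [hstepC i hei]; exact hFassoc
      exact h1.trans h2
    exact ⟨fun hd => hA.symm.dvd.trans hd, fun hd => hA.dvd.trans hd⟩
  -- subsingleton components
  have hQsub : ∀ i : ι, e i = 0 → Subsingleton (Q i) := by
    intro i hei
    rw [hQ]
    rw [Submodule.Quotient.subsingleton_iff, hei, pow_zero,
      Ideal.submodule_span_eq, Ideal.span_singleton_one]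
  -- index the nonzero components
  set ι' := {i : ι // e i ≠ 0} with hι'
  set k := Fintype.card ι' with hk
  set σ : Fin k ≃ ι' := (Fintype.equivFin ι').symm with hσ
  -- basis vectors
  set eb : Fin k → V := fun j => of.symm (E.symm (gen (σ j).1)) with heb
  -- main computation
  have hkey : ∀ g : Fin k → K[X], ∑ j, aeval A (g j) (eb j)
      = of.symm (E.symm (∑ j, DirectSum.lof K[X] ι Q (σ j).1 (Submodule.Quotient.mk (g j)))) := by
    intro g
    rw [map_sum, map_sum]
    refine Finset.sum_congr rfl fun j _ => ?_
    rw [heb]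
    have h1 : (g j : K[X]) • (E.symm (gen (σ j).1))
        = of (aeval A (g j) (of.symm (E.symm (gen (σ j).1)))) := hsmul _ _
    have h2 : (g j : K[X]) • (E.symm (gen (σ j).1))
        = E.symm (DirectSum.lof K[X] ι Q (σ j).1 (Submodule.Quotient.mk (g j))) := by
      rw [← hqsmul, map_smul]
    have h3 := h1.symm.trans h2
    have := congrArg of.symm h3
    rwa [LinearEquiv.symm_apply_apply] at this
  -- decomposition of an arbitrary element
  have hdecomp : ∀ w : ⨁ i, Q i,
      w = ∑ j : Fin k, DirectSum.lof K[X] ι Q (σ j).1 (w (σ j).1) := by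
    intro w
    have h1 : ∑ i ∈ Finset.univ, DirectSum.of Q i (w i) = w := DirectSum.sum_univ_of w
    have h2 : ∀ i : ι, e i = 0 → DirectSum.of Q i (w i) = 0 := by
      intro i hei
      haveI := hQsub i hei
      rw [Subsingleton.elim (w i) 0, map_zero]
    calc w = ∑ i ∈ Finset.univ, DirectSum.of Q i (w i) := h1.symm
      _ = ∑ i ∈ Finset.univ.filter (fun i => e i ≠ 0), DirectSum.of Q i (w i) := by
          symm
          apply Finset.sum_subset (Finset.filter_subset _ _)
          intro i _ hni
          apply h2 i
          by_contra hc
          exact hni (Finset.mem_filter.mpr ⟨Finset.mem_univ i, hc⟩)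
      _ = ∑ i : ι', DirectSum.of Q i.1 (w i.1) := by
          refine Finset.sum_subtype _ (fun i => ?_) _
          simp [hι']
      _ = ∑ j : Fin k, DirectSum.of Q (σ j).1 (w (σ j).1) :=
          (Equiv.sum_comp σ (fun i : ι' => DirectSum.of Q i.1 (w i.1))).symm
      _ = ∑ j : Fin k, DirectSum.lof K[X] ι Q (σ j).1 (w (σ j).1) := rfl
  -- extracting components from such a sum
  have hcomp : ∀ (z : (j : Fin k) → Q (σ j).1) (j₀ : Fin k),
      (∑ j : Fin k, DirectSum.lof K[X] ι Q (σ j).1 (z j)) (σ j₀).1 = z j₀ := by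
    intro z j₀
    rw [DFinsupp.finset_sum_apply]
    rw [Finset.sum_eq_single j₀]
    · exact DirectSum.of_eq_same _ _
    · intro j _ hne
      refine DirectSum.of_eq_of_ne _ _ _ ?_
      intro hc
      exact hne (σ.injective (Subtype.ext hc.symm))
    · intro h
      exact absurd (Finset.mem_univ j₀) h
  refine ⟨k, eb, fun v => ?_⟩
  set w : ⨁ i, Q i := E (of v) with hw
  choose q hq using fun j : Fin k => Submodule.Quotient.mk_surjective _ (w (σ j).1)
  set g₀ : Fin k → K[X] := fun j => q j %ₘ F with hg₀
  have hg₀mem : ∀ j, g₀ j ∈ degreeLT K m := by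
    intro j
    rw [mem_degreeLT, hg₀]
    calc (q j %ₘ F).degree < F.degree := degree_modByMonic_lt _ hFmonic
      _ = (m : ℕ) := hFdeg
  have hg₀mk : ∀ j, (Submodule.Quotient.mk (g₀ j) : Q (σ j).1) = w (σ j).1 := by
    intro j
    rw [← hq j]
    symm
    rw [Submodule.Quotient.eq]
    rw [hFdvd _ (σ j).2]
    show F ∣ q j - g₀ j
    have hqg : q j - g₀ j = F * (q j /ₘ F) := by
      simp only [hg₀]
      rw [modByMonic_eq_sub_mul_div _ F]
      ring
    rw [hqg]
    exact Dvd.intro _ rfl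
  -- the candidate
  refine ⟨fun j => ⟨g₀ j, hg₀mem j⟩, ?_, ?_⟩
  · show v = ∑ j, aeval A (g₀ j) (eb j)
    rw [hkey]
    have : ∑ j, DirectSum.lof K[X] ι Q (σ j).1
        (Submodule.Quotient.mk (g₀ j) : Q (σ j).1) = w := by
      conv_rhs => rw [hdecomp w]
      exact Finset.sum_congr rfl fun j _ => by rw [hg₀mk j]
    rw [this, hw, LinearEquiv.symm_apply_apply, LinearEquiv.symm_apply_apply]
  · rintro g' hg'
    have h1 : w = ∑ j, DirectSum.lof K[X] ι Q (σ j).1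
        (Submodule.Quotient.mk ((g' j : K[X])) : Q (σ j).1) := by
      rw [hw, hg', hkey, LinearEquiv.apply_symm_apply, LinearEquiv.apply_symm_apply]
    funext j₀
    have h2 : (Submodule.Quotient.mk ((g' j₀ : K[X])) : Q (σ j₀).1) = w (σ j₀).1 := by
      conv_rhs => rw [h1]
      exact (hcomp (fun j => Submodule.Quotient.mk ((g' j : K[X]))) j₀).symm
    have h3 : (Submodule.Quotient.mk ((g' j₀ : K[X])) : Q (σ j₀).1)
        = Submodule.Quotient.mk (g₀ j₀) := by rw [h2, hg₀mk j₀]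
    have h4 : F ∣ (g' j₀ : K[X]) - g₀ j₀ := by
      rw [← hFdvd _ (σ j₀).2]
      exact (Submodule.Quotient.eq _).mp h3
    have h5 : ((g' j₀ : K[X]) - g₀ j₀).degree < F.degree := by
      rw [hFdeg]
      have ha := mem_degreeLT.mp (g' j₀).2
      have hb := mem_degreeLT.mp (hg₀mem j₀)
      calc ((g' j₀ : K[X]) - g₀ j₀).degree ≤ max (g' j₀ : K[X]).degree (g₀ j₀).degree :=
        degree_sub_le _ _
        _ < (m : ℕ) := max_lt ha hb
    have h6 : (g' j₀ : K[X]) - g₀ j₀ = 0 := eq_zero_of_dvd_of_degree_lt h4 h5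
    exact Subtype.ext (sub_eq_zero.mp h6)

theorem stmt19 {K V : Type*} [Field K] [AddCommGroup V] [Module K V] [FiniteDimensional K V]
    (A : Module.End K V) (f : K[X]) (hf : Irreducible f) (d : ℕ)
    (hmin : minpoly K A = f ^ d)
    (hhom : ∀ j ≤ d, LinearMap.range ((aeval A f) ^ j) = LinearMap.ker ((aeval A f) ^ (d - j))) :
    ∃ (k : ℕ) (e : Fin k → V), ∀ v : V,
      ∃! g : Fin k → Polynomial.degreeLT K (d * f.natDegree),
        v = ∑ i, (aeval A ((g i : K[X]))) (e i) := by
  exact stmt19_aux A f hf d hmin hhom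
end
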